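/- arXiv:1310.2926 — 3 statements merged into one kernel-verified Lean document; each statement's English description precedes it below -/
import Mathlib

section
/- Let n > 2, let A be an n×n real symmetric matrix with zero diagonal with U-centered matrix Ã, and let c be a real constant. Let B be the symmetric zero-diagonal matrix obtained by adding c to every off-diagonal entry of Ã (B_{ij} = Ã_{ij} + c for i ≠ j, B_{ii} = 0). Then the U-centered matrix of B equals Ã. -/
/-- The U-centered matrix of an `n × n` real matrix `A`. -/
noncomputable def Ucenter {n : ℕ} (A : Matrix (Fin n) (Fin n) ℝ) :
    Matrix (Fin n) (Fin n) ℝ :=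
  Matrix.of fun i j =>
    if i = j then 0
    else A i j - (∑ l, A i l) / ((n : ℝ) - 2) - (∑ k, A k j) / ((n : ℝ) - 2)
      + (∑ k, ∑ l, A k l) / (((n : ℝ) - 1) * ((n : ℝ) - 2))

lemma sum_ite_diag {n : ℕ} (i : Fin n) (g : Fin n → ℝ) :
    ∑ j, (if i = j then 0 else g j) = (∑ j, g j) - g i := by
  have : ∀ j, (if i = j then 0 else g j) = g j - (if i = j then g j else 0) := by
    intro j; by_cases h : i = j <;> simp [h]
  rw [Finset.sum_congr rfl (fun j _ => this j), Finset.sum_sub_distrib,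
    Finset.sum_ite_eq]
  simp

lemma Ucenter_row_sum {n : ℕ} (hn : 2 < n) (A : Matrix (Fin n) (Fin n) ℝ)
    (hsymm : A.IsSymm) (hdiag : ∀ i, A i i = 0) (i : Fin n) :
    ∑ j, Ucenter A i j = 0 := by
  have h3 : (3:ℝ) ≤ (n:ℝ) := by exact_mod_cast hn
  have h2 : (n:ℝ) - 2 ≠ 0 := ne_of_gt (by linarith)
  have h1 : (n:ℝ) - 1 ≠ 0 := ne_of_gt (by linarith)
  have hsym : ∀ k l, A k l = A l k := fun k l => (congrFun (congrFun hsymm l) k)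
  simp only [Ucenter, Matrix.of_apply]
  rw [sum_ite_diag]
  have hci : (∑ k, A k i) = ∑ l, A i l :=
    Finset.sum_congr rfl (fun k _ => hsym k i)
  have hT : (∑ j, ∑ k, A k j) = ∑ k, ∑ l, A k l := Finset.sum_comm
  simp only [Finset.sum_add_distrib, Finset.sum_sub_distrib, ← Finset.sum_div,
    Finset.sum_const, Finset.card_univ, Fintype.card_fin, nsmul_eq_mul, hT, hci,
    hdiag i]
  field_simp
  ring

lemma Ucenter_symm {n : ℕ} (A : Matrix (Fin n) (Fin n) ℝ)
    (hsymm : A.IsSymm) : (Ucenter A).IsSymm := by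
  have hsym : ∀ k l, A k l = A l k := fun k l => (congrFun (congrFun hsymm l) k)
  ext i j
  simp only [Matrix.transpose_apply, Ucenter, Matrix.of_apply]
  by_cases h : i = j
  · simp [h]
  · rw [if_neg h, if_neg (fun hji => h hji.symm), hsym j i]
    have : (∑ l, A j l) = ∑ k, A k j := Finset.sum_congr rfl (fun k _ => hsym j k)
    have h2 : (∑ l, A i l) = ∑ k, A k i := Finset.sum_congr rfl (fun k _ => hsym i k)
    rw [this, h2]
    ring

lemma Ucenter_col_sum {n : ℕ} (hn : 2 < n) (A : Matrix (Fin n) (Fin n) ℝ)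
    (hsymm : A.IsSymm) (hdiag : ∀ i, A i i = 0) (j : Fin n) :
    ∑ k, Ucenter A k j = 0 := by
  have hs := Ucenter_symm A hsymm
  have : ∀ k, Ucenter A k j = Ucenter A j k :=
    fun k => congrFun (congrFun hs j) k
  rw [Finset.sum_congr rfl (fun k _ => this k)]
  exact Ucenter_row_sum hn A hsymm hdiag j

/-- Adding a constant `c` to every off-diagonal entry of a U-centered matrix
does not change its U-centering. -/
theorem Ucenter_add_const {n : ℕ} (hn : 2 < n)
    (A : Matrix (Fin n) (Fin n) ℝ) (hsymm : A.IsSymm)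
    (hdiag : ∀ i, A i i = 0) (c : ℝ)
    (B : Matrix (Fin n) (Fin n) ℝ)
    (hB : ∀ i j, B i j = if i = j then 0 else Ucenter A i j + c) :
    Ucenter B = Ucenter A := by
  have h3 : (3:ℝ) ≤ (n:ℝ) := by exact_mod_cast hn
  have h2 : (n:ℝ) - 2 ≠ 0 := ne_of_gt (by linarith)
  have h1 : (n:ℝ) - 1 ≠ 0 := ne_of_gt (by linarith)
  have hUdiag : ∀ i, Ucenter A i i = 0 := by intro i; simp [Ucenter]
  have hrow : ∀ i, (∑ l, B i l) = ((n:ℝ) - 1) * c := by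
    intro i
    have : (∑ l, B i l) = ∑ l, (if i = l then 0 else Ucenter A i l + c) :=
      Finset.sum_congr rfl (fun l _ => hB i l)
    rw [this, sum_ite_diag]
    rw [Finset.sum_add_distrib, Finset.sum_const, Finset.card_univ,
      Fintype.card_fin, nsmul_eq_mul, Ucenter_row_sum hn A hsymm hdiag i,
      hUdiag i]
    ring
  have hcol : ∀ j, (∑ k, B k j) = ((n:ℝ) - 1) * c := by
    intro j
    have e1 : ∀ k, B k j = (if j = k then 0 else Ucenter A k j + c) := by
      intro k
      rw [hB k j]
      by_cases h : k = j
      · simp [h]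
      · rw [if_neg h, if_neg (fun hh => h hh.symm)]
    rw [Finset.sum_congr rfl (fun k _ => e1 k), sum_ite_diag]
    rw [Finset.sum_add_distrib, Finset.sum_const, Finset.card_univ,
      Fintype.card_fin, nsmul_eq_mul, Ucenter_col_sum hn A hsymm hdiag j,
      hUdiag j]
    ring
  have htot : (∑ k, ∑ l, B k l) = (n:ℝ) * (((n:ℝ) - 1) * c) := by
    rw [Finset.sum_congr rfl (fun k _ => hrow k), Finset.sum_const,
      Finset.card_univ, Fintype.card_fin, nsmul_eq_mul]
  ext i j
  simp only [Ucenter, Matrix.of_apply]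
  by_cases h : i = j
  · simp [h]
  · rw [if_neg h, if_neg h, hB i j, if_neg h, hrow i, hcol j, htot]
    simp only [Ucenter, Matrix.of_apply, if_neg h]
    field_simp
    ring
end

section
/- Let (X₁,Y₁),…,(Xₙ,Yₙ), n > 3, be iid copies of a pair (X,Y) of random vectors with X ∈ ℝ^p, Y ∈ ℝ^q, let A = (|X_i − X_j|) and B = (|Y_i − Y_j|) be the Euclidean distance matrices of the two samples, and let Ã, B̃ be their U-centered matrices. Assume that E|X−X'|, E|Y−Y'|, E[|X−X'||Y−Y'|] and E[|X−X'||Y−Y''|] are finite, where (X,Y),(X',Y'),(X'',Y'') are iid. Then (Ã · B̃) := (1/(n(n−3))) Σ_{i≠j} Ã_{ij} B̃_{ij} is an unbiased estimator of the squared population distance covariance: E[(Ã · B̃)] = E[|X−X'||Y−Y'|] + E|X−X'|·E|Y−Y'| − 2E[|X−X'||Y−Y''|]. -/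
/-!
Since the U-centered matrix `Ã` of a symmetric, zero-diagonal `A` has zero row and column sums,
`Σ Ã_ij B̃_ij = Σ Ã_ij B_ij`; expanding the centering terms of `Ã` then gives
`Σ Ã_ij B̃_ij = Σ A_ij B_ij - 2/(n-2) Σ_i a_i· b_i· + a·· b··/((n-1)(n-2))`.
For an iid sample `Z` and symmetric kernels `a`, `b` vanishing on the diagonal (here the two
distance functions), `E[a(Zᵢ, Zⱼ) b(Zₖ, Zₗ)]` depends only on which of `i, j, k, l` coincide
(`kernelMoment`): it is `E[a(Z₀, Z₁) b(Z₀, Z₁)]` when `{i, j} = {k, l}`,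
`E[a(Z₀, Z₁) b(Z₀, Z₂)]` when the two pairs share one index, and `E a(Z₀, Z₁) · E b(Z₀, Z₁)` by
independence when they are disjoint. Counting index patterns turns the expectations of the three
sums into polynomials in `n` whose weights combine to the distance covariance.
-/

open MeasureTheory ProbabilityTheory

open Finset
open scoped Matrix

theorem Finset.sum_univ_eq_sum_add_card_compl_mul {ι : Type*} [Fintype ι] [DecidableEq ι]
    {f : ι → ℝ} {z : ℝ} (s : Finset ι) (h : ∀ k ∉ s, f k = z) :
    ∑ k, f k = ∑ k ∈ s, f k + ((Fintype.card ι : ℝ) - #s) * z := by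
  rw [← sum_add_sum_compl s f, sum_congr rfl fun k hk => h k (mem_compl.mp hk), sum_const,
    card_compl, nsmul_eq_mul, Nat.cast_sub (card_le_univ s)]

theorem Finset.sum_sum_eq_of_diag_zero_of_offDiag_const {ι : Type*} [Fintype ι]
    {F : ι → ι → ℝ} {c : ℝ} (h0 : ∀ i, F i i = 0) (hc : ∀ i j, i ≠ j → F i j = c) :
    ∑ i, ∑ j, F i j = Fintype.card ι * ((Fintype.card ι - 1) * c) := by
  classical
  have hrow (i : ι) : ∑ j, F i j = (Fintype.card ι - 1) * c := by
    rw [sum_univ_eq_sum_add_card_compl_mul {i} fun j hj => hc i j (Ne.symm (by simpa using hj))]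
    simp [h0]
  simp [hrow]

namespace Ucenter

variable {n : ℕ}

theorem apply_self (A : Matrix (Fin n) (Fin n) ℝ) (i : Fin n) : Ucenter A i i = 0 := by
  simp [Ucenter]

theorem apply_of_ne (A : Matrix (Fin n) (Fin n) ℝ) {i j : Fin n} (h : i ≠ j) :
    Ucenter A i j = A i j - (∑ l, A i l) / ((n : ℝ) - 2) - (∑ k, A k j) / ((n : ℝ) - 2)
      + (∑ k, ∑ l, A k l) / (((n : ℝ) - 1) * ((n : ℝ) - 2)) := by
  simp [Ucenter, h]

theorem transpose (A : Matrix (Fin n) (Fin n) ℝ) : (Ucenter A)ᵀ = Ucenter Aᵀ := by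
  ext i j
  rcases eq_or_ne i j with rfl | h
  · simp [apply_self]
  · rw [Matrix.transpose_apply, apply_of_ne _ h.symm, apply_of_ne _ h]
    simp only [Matrix.transpose_apply]
    rw [sum_comm]
    ring

theorem isSymm {A : Matrix (Fin n) (Fin n) ℝ} (hA : A.IsSymm) : (Ucenter A).IsSymm := by
  rw [Matrix.IsSymm, transpose, hA]

theorem sum_row_eq_zero (hn : 2 < n) {A : Matrix (Fin n) (Fin n) ℝ} (hA : A.IsSymm)
    (hA0 : ∀ i, A i i = 0) (i : Fin n) : ∑ j, Ucenter A i j = 0 := by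
  set F : Fin n → ℝ := fun j => A i j - (∑ l, A i l) / ((n : ℝ) - 2)
    - (∑ k, A k j) / ((n : ℝ) - 2) + (∑ k, ∑ l, A k l) / (((n : ℝ) - 1) * ((n : ℝ) - 2))
  have hF (j : Fin n) : Ucenter A i j = F j - if j = i then F i else 0 := by
    rcases eq_or_ne j i with rfl | hji
    · simp [apply_self]
    · rw [apply_of_ne _ hji.symm, if_neg hji, sub_zero]
  have hcol (j : Fin n) : ∑ k, A k j = ∑ l, A j l := sum_congr rfl fun k _ => hA.apply j k
  have h1 : (n : ℝ) - 1 ≠ 0 := by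
    rw [sub_ne_zero]; exact_mod_cast (by omega : n ≠ 1)
  have h2 : (n : ℝ) - 2 ≠ 0 := by
    rw [sub_ne_zero]; exact_mod_cast (by omega : n ≠ 2)
  simp only [hF, sum_sub_distrib, sum_ite_eq', mem_univ, if_true, F, sum_add_distrib,
    ← sum_div, sum_const, card_univ, Fintype.card_fin, nsmul_eq_mul, hcol, hA0]
  field_simp
  ring

theorem sum_col_eq_zero (hn : 2 < n) {A : Matrix (Fin n) (Fin n) ℝ} (hA : A.IsSymm)
    (hA0 : ∀ i, A i i = 0) (j : Fin n) : ∑ i, Ucenter A i j = 0 := by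
  simpa only [(isSymm hA).apply j] using sum_row_eq_zero hn hA hA0 j

end Ucenter

section UcenterInner

variable {n : ℕ}

theorem sum_mul_Ucenter {M : Matrix (Fin n) (Fin n) ℝ} (hM : ∀ i, M i i = 0)
    (B : Matrix (Fin n) (Fin n) ℝ) :
    ∑ i, ∑ j, M i j * Ucenter B i j
      = ∑ i, ∑ j, M i j * B i j
        - ∑ i, (∑ l, B i l) / ((n : ℝ) - 2) * ∑ j, M i j
        - ∑ j, (∑ k, B k j) / ((n : ℝ) - 2) * ∑ i, M i j
        + (∑ k, ∑ l, B k l) / (((n : ℝ) - 1) * ((n : ℝ) - 2)) * ∑ i, ∑ j, M i j := by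
  have h (i j : Fin n) : M i j * Ucenter B i j = M i j * (B i j - (∑ l, B i l) / ((n : ℝ) - 2)
      - (∑ k, B k j) / ((n : ℝ) - 2) + (∑ k, ∑ l, B k l) / (((n : ℝ) - 1) * ((n : ℝ) - 2))) := by
    rcases eq_or_ne i j with rfl | hij
    · simp [hM]
    · rw [Ucenter.apply_of_ne _ hij]
  simp only [h, mul_add, mul_sub, sum_add_distrib, sum_sub_distrib, mul_sum]
  rw [sum_comm (f := fun i j => M i j * ((∑ k, B k j) / ((n : ℝ) - 2)))]
  simp only [mul_comm]

theorem sum_Ucenter_mul_Ucenter_eq_sum_Ucenter_mul (hn : 2 < n)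
    {A : Matrix (Fin n) (Fin n) ℝ} (hA : A.IsSymm) (hA0 : ∀ i, A i i = 0)
    (B : Matrix (Fin n) (Fin n) ℝ) :
    ∑ i, ∑ j, Ucenter A i j * Ucenter B i j = ∑ i, ∑ j, Ucenter A i j * B i j := by
  simp [sum_mul_Ucenter (Ucenter.apply_self A), Ucenter.sum_row_eq_zero hn hA hA0,
    Ucenter.sum_col_eq_zero hn hA hA0]

theorem sum_Ucenter_mul {A B : Matrix (Fin n) (Fin n) ℝ} (hA : A.IsSymm) (hB : B.IsSymm)
    (hB0 : ∀ i, B i i = 0) :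
    ∑ i, ∑ j, Ucenter A i j * B i j
      = ∑ i, ∑ j, A i j * B i j - 2 / ((n : ℝ) - 2) * ∑ i, (∑ j, A i j) * (∑ j, B i j)
        + (∑ i, ∑ j, A i j) * (∑ i, ∑ j, B i j) / (((n : ℝ) - 1) * ((n : ℝ) - 2)) := by
  have hcolA (j : Fin n) : ∑ k, A k j = ∑ l, A j l := sum_congr rfl fun k _ => hA.apply j k
  have hcolB (j : Fin n) : ∑ k, B k j = ∑ l, B j l := sum_congr rfl fun k _ => hB.apply j k
  simp_rw [mul_comm (Ucenter A _ _)]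
  rw [sum_mul_Ucenter hB0]
  simp only [hcolA, hcolB, div_mul_eq_mul_div, ← sum_div]
  simp only [mul_comm (B _ _)]
  ring

theorem sum_Ucenter_mul_Ucenter (hn : 2 < n) {A B : Matrix (Fin n) (Fin n) ℝ}
    (hA : A.IsSymm) (hA0 : ∀ i, A i i = 0) (hB : B.IsSymm) (hB0 : ∀ i, B i i = 0) :
    ∑ i, ∑ j, Ucenter A i j * Ucenter B i j
      = ∑ i, ∑ j, A i j * B i j - 2 / ((n : ℝ) - 2) * ∑ i, (∑ j, A i j) * (∑ j, B i j)
        + (∑ i, ∑ j, A i j) * (∑ i, ∑ j, B i j) / (((n : ℝ) - 1) * ((n : ℝ) - 2)) := by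
  rw [sum_Ucenter_mul_Ucenter_eq_sum_Ucenter_mul hn hA hA0, sum_Ucenter_mul hA hB hB0]

theorem sum_Ucenter_mul_Ucenter_of_kernel {S : Type*} (hn : 2 < n) {a b : S → S → ℝ}
    (ha_symm : ∀ x y, a x y = a y x) (hb_symm : ∀ x y, b x y = b y x)
    (ha0 : ∀ x, a x x = 0) (hb0 : ∀ x, b x x = 0) (z : Fin n → S) :
    ∑ i, ∑ j, Ucenter (Matrix.of fun k l => a (z k) (z l)) i j
        * Ucenter (Matrix.of fun k l => b (z k) (z l)) i j
      = ∑ i, ∑ j, a (z i) (z j) * b (z i) (z j)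
        - 2 / ((n : ℝ) - 2) * ∑ i, ∑ j, ∑ k, a (z i) (z j) * b (z i) (z k)
        + (∑ i, ∑ j, ∑ k, ∑ l, a (z i) (z j) * b (z k) (z l))
          / (((n : ℝ) - 1) * ((n : ℝ) - 2)) := by
  rw [sum_Ucenter_mul_Ucenter (A := .of fun k l => a (z k) (z l))
    (B := .of fun k l => b (z k) (z l)) hn (.ext fun i j => ha_symm _ _) (fun i => ha0 _)
    (.ext fun i j => hb_symm _ _) (fun i => hb0 _)]
  simp only [Matrix.of_apply, ← mul_sum, ← sum_mul]

theorem sum_sum_ite_Ucenter_mul_Ucenter (A B : Matrix (Fin n) (Fin n) ℝ) :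
    ∑ i, ∑ j, (if i = j then 0 else Ucenter A i j * Ucenter B i j)
      = ∑ i, ∑ j, Ucenter A i j * Ucenter B i j := by
  refine sum_congr rfl fun i _ => sum_congr rfl fun j _ => ?_
  split_ifs with h
  · simp [h, Ucenter.apply_self]
  · rfl

end UcenterInner

section KernelMoment

variable {ι : Type*} [DecidableEq ι]

def kernelMoment (α β γ δ : ℝ) (i j k l : ι) : ℝ :=
  if i = j ∨ k = l then 0
  else if (k = i ∧ l = j) ∨ (k = j ∧ l = i) then γ
  else if k = i ∨ k = j ∨ l = i ∨ l = j then δ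
  else α * β

variable (α β γ δ : ℝ)

theorem kernelMoment_swap_left (i j k l : ι) :
    kernelMoment α β γ δ j i k l = kernelMoment α β γ δ i j k l := by
  unfold kernelMoment
  split_ifs <;> grind

theorem kernelMoment_swap_right (i j k l : ι) :
    kernelMoment α β γ δ i j l k = kernelMoment α β γ δ i j k l := by
  unfold kernelMoment
  split_ifs <;> grind

variable [Fintype ι]

theorem sum_kernelMoment_self_left {i j : ι} (hij : i ≠ j) :
    ∑ k, kernelMoment α β γ δ i j i k = γ + (Fintype.card ι - 2) * δ := by
  have hoff : ∀ k ∉ ({i, j} : Finset ι), kernelMoment α β γ δ i j i k = δ := fun k hk => by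
    simp only [mem_insert, mem_singleton, not_or] at hk
    simp [kernelMoment, hij, hk.1, hk.2, Ne.symm hk.1]
  rw [sum_univ_eq_sum_add_card_compl_mul {i, j} hoff, sum_pair hij, card_pair hij]
  simp [kernelMoment, hij]

theorem sum_kernelMoment_of_ne {i j k : ι} (hij : i ≠ j) (hki : k ≠ i) (hkj : k ≠ j) :
    ∑ l, kernelMoment α β γ δ i j k l = 2 * δ + (Fintype.card ι - 3) * (α * β) := by
  have hoff : ∀ l ∉ ({i, j, k} : Finset ι), kernelMoment α β γ δ i j k l = α * β :=
    fun l hl => by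
      simp only [mem_insert, mem_singleton, not_or] at hl
      simp [kernelMoment, hij, hl.1, hl.2.1, Ne.symm hl.2.2, hki, hkj]
  have hi : i ∉ ({j, k} : Finset ι) := by simp [hij, hki.symm]
  rw [sum_univ_eq_sum_add_card_compl_mul {i, j, k} hoff, sum_insert hi, sum_pair hkj.symm,
    card_insert_of_notMem hi, card_pair hkj.symm]
  simp [kernelMoment, hij, hki, hkj, two_mul]

theorem sum_sum_kernelMoment {i j : ι} (hij : i ≠ j) :
    ∑ k, ∑ l, kernelMoment α β γ δ i j k l
      = 2 * (γ + (Fintype.card ι - 2) * δ)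
        + (Fintype.card ι - 2) * (2 * δ + (Fintype.card ι - 3) * (α * β)) := by
  have hoff : ∀ k ∉ ({i, j} : Finset ι),
      ∑ l, kernelMoment α β γ δ i j k l = 2 * δ + (Fintype.card ι - 3) * (α * β) :=
    fun k hk => by
      simp only [mem_insert, mem_singleton, not_or] at hk
      exact sum_kernelMoment_of_ne α β γ δ hij hk.1 hk.2
  rw [sum_univ_eq_sum_add_card_compl_mul {i, j} hoff, sum_pair hij, card_pair hij,
    sum_kernelMoment_self_left α β γ δ hij]
  simp_rw [← kernelMoment_swap_left α β γ δ i j j]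
  rw [sum_kernelMoment_self_left α β γ δ hij.symm]
  ring

theorem sum_sum_kernelMoment_diag :
    ∑ i, ∑ j, kernelMoment α β γ δ (i : ι) j i j
      = Fintype.card ι * ((Fintype.card ι - 1) * γ) :=
  sum_sum_eq_of_diag_zero_of_offDiag_const (by simp [kernelMoment]) fun i j hij => by
    simp [kernelMoment, hij]

theorem sum_sum_sum_kernelMoment_self_left :
    ∑ i, ∑ j, ∑ k, kernelMoment α β γ δ (i : ι) j i k
      = Fintype.card ι * ((Fintype.card ι - 1) * (γ + (Fintype.card ι - 2) * δ)) :=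
  sum_sum_eq_of_diag_zero_of_offDiag_const (by simp [kernelMoment]) fun _ _ hij =>
    sum_kernelMoment_self_left α β γ δ hij

theorem sum_sum_sum_sum_kernelMoment :
    ∑ i, ∑ j, ∑ k, ∑ l, kernelMoment α β γ δ (i : ι) j k l
      = Fintype.card ι * ((Fintype.card ι - 1) * (2 * (γ + (Fintype.card ι - 2) * δ)
        + (Fintype.card ι - 2) * (2 * δ + (Fintype.card ι - 3) * (α * β)))) :=
  sum_sum_eq_of_diag_zero_of_offDiag_const (by simp [kernelMoment]) fun _ _ hij =>
    sum_sum_kernelMoment α β γ δ hij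

end KernelMoment

theorem MeasureTheory.integrable_and_integral_finsetSum {Ω ι : Type*} [MeasurableSpace Ω]
    {μ : Measure Ω} {f : ι → Ω → ℝ} {c : ι → ℝ} (s : Finset ι)
    (h : ∀ i ∈ s, Integrable (f i) μ ∧ ∫ ω, f i ω ∂μ = c i) :
    Integrable (fun ω => ∑ i ∈ s, f i ω) μ ∧ ∫ ω, ∑ i ∈ s, f i ω ∂μ = ∑ i ∈ s, c i :=
  ⟨integrable_finsetSum s fun i hi => (h i hi).1,
    (integral_finsetSum s fun i hi => (h i hi).1).trans (sum_congr rfl fun i hi => (h i hi).2)⟩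

section IID

variable {Ω ι S : Type*} [MeasurableSpace Ω] [MeasurableSpace S] {μ : Measure Ω}
  [IsProbabilityMeasure μ] {Z : ι → Ω → S}

theorem ProbabilityTheory.iIndepFun.identDistrib_pair (hindep : iIndepFun Z μ)
    (hid : ∀ i j, IdentDistrib (Z i) (Z j) μ μ) {i j i' j' : ι} (hij : i ≠ j) (hij' : i' ≠ j') :
    IdentDistrib (fun ω => (Z i ω, Z j ω)) (fun ω => (Z i' ω, Z j' ω)) μ μ :=
  (hid i i').prodMk (hid j j') (hindep.indepFun hij) (hindep.indepFun hij')

theorem ProbabilityTheory.iIndepFun.identDistrib_triple (hZ : ∀ i, Measurable (Z i))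
    (hindep : iIndepFun Z μ) (hid : ∀ i j, IdentDistrib (Z i) (Z j) μ μ) {i j k i' j' k' : ι}
    (hij : i ≠ j) (hik : i ≠ k) (hjk : j ≠ k) (hij' : i' ≠ j') (hik' : i' ≠ k')
    (hjk' : j' ≠ k') :
    IdentDistrib (fun ω => ((Z i ω, Z j ω), Z k ω)) (fun ω => ((Z i' ω, Z j' ω), Z k' ω)) μ μ :=
  (hindep.identDistrib_pair hid hij hij').prodMk (hid k k')
    (hindep.indepFun_prodMk hZ i j k hik hjk) (hindep.indepFun_prodMk hZ i' j' k' hik' hjk')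

theorem integrable_and_integral_kernel_mul [DecidableEq ι] (hZ : ∀ i, Measurable (Z i))
    (hindep : iIndepFun Z μ) (hid : ∀ i j, IdentDistrib (Z i) (Z j) μ μ) {a b : S → S → ℝ}
    (ha : Measurable (Function.uncurry a)) (hb : Measurable (Function.uncurry b))
    (ha_symm : ∀ x y, a x y = a y x) (hb_symm : ∀ x y, b x y = b y x)
    (ha0 : ∀ x, a x x = 0) (hb0 : ∀ x, b x x = 0) {i₀ i₁ i₂ : ι}
    (h01 : i₀ ≠ i₁) (h02 : i₀ ≠ i₂) (h12 : i₁ ≠ i₂)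
    (hα : Integrable (fun ω => a (Z i₀ ω) (Z i₁ ω)) μ)
    (hβ : Integrable (fun ω => b (Z i₀ ω) (Z i₁ ω)) μ)
    (hγ : Integrable (fun ω => a (Z i₀ ω) (Z i₁ ω) * b (Z i₀ ω) (Z i₁ ω)) μ)
    (hδ : Integrable (fun ω => a (Z i₀ ω) (Z i₁ ω) * b (Z i₀ ω) (Z i₂ ω)) μ)
    (i j k l : ι) :
    Integrable (fun ω => a (Z i ω) (Z j ω) * b (Z k ω) (Z l ω)) μ ∧
      ∫ ω, a (Z i ω) (Z j ω) * b (Z k ω) (Z l ω) ∂μ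
        = kernelMoment (∫ ω, a (Z i₀ ω) (Z i₁ ω) ∂μ) (∫ ω, b (Z i₀ ω) (Z i₁ ω) ∂μ)
            (∫ ω, a (Z i₀ ω) (Z i₁ ω) * b (Z i₀ ω) (Z i₁ ω) ∂μ)
            (∫ ω, a (Z i₀ ω) (Z i₁ ω) * b (Z i₀ ω) (Z i₂ ω) ∂μ) i j k l := by
  have hpair {i j : ι} (hij : i ≠ j) := hindep.identDistrib_pair hid hij h01
  rcases eq_or_ne i j with rfl | hij
  · simp [ha0, kernelMoment]
  rcases eq_or_ne k l with rfl | hkl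
  · simp [hb0, kernelMoment]
  wlog hk : k = i ∨ k = j generalizing k l
  · by_cases hl : l = i ∨ l = j
    · simpa [hb_symm, kernelMoment_swap_right] using this l k hkl.symm hl
    simp only [not_or] at hk hl
    have hind : IndepFun (fun ω => a (Z i ω) (Z j ω)) (fun ω => b (Z k ω) (Z l ω)) μ :=
      (hindep.indepFun_prodMk_prodMk hZ i j k l (Ne.symm hk.1) (Ne.symm hl.1) (Ne.symm hk.2)
        (Ne.symm hl.2)).comp ha hb
    have hA := (hpair hij).comp ha
    have hB := (hpair hkl).comp hb
    have hAi : Integrable (fun ω => a (Z i ω) (Z j ω)) μ := hA.integrable_iff.mpr hα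
    have hBi : Integrable (fun ω => b (Z k ω) (Z l ω)) μ := hB.integrable_iff.mpr hβ
    refine ⟨hind.integrable_mul hAi hBi, ?_⟩
    rw [hind.integral_fun_mul_eq_mul_integral hAi.1 hBi.1]
    simpa [kernelMoment, hij, hkl, hk.1, hk.2, hl.1, hl.2] using
      congrArg₂ (· * ·) hA.integral_eq hB.integral_eq
  wlog hki : k = i generalizing i j
  · simpa [ha_symm, kernelMoment_swap_left] using
      this j i hij.symm hk.symm (hk.resolve_left hki)
  subst hki
  rcases eq_or_ne l j with rfl | hlj
  · have h := (hpair hij).comp (ha.mul hb)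
    exact ⟨h.integrable_iff.mpr hγ, by simpa [kernelMoment, hij] using h.integral_eq⟩
  · have h := (hindep.identDistrib_triple hZ hid hij hkl hlj.symm h01 h02 h12).comp
      ((ha.comp measurable_fst).mul (hb.comp (measurable_fst.fst.prodMk measurable_snd)))
    exact ⟨h.integrable_iff.mpr hδ, by simpa [kernelMoment, hij, hkl, hlj] using h.integral_eq⟩

theorem integral_sum_Ucenter_mul_Ucenter {n : ℕ} (hn : 3 < n) {Z : Fin n → Ω → S}
    (hZ : ∀ i, Measurable (Z i)) (hindep : iIndepFun Z μ)
    (hid : ∀ i j, IdentDistrib (Z i) (Z j) μ μ) {a b : S → S → ℝ}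
    (ha : Measurable (Function.uncurry a)) (hb : Measurable (Function.uncurry b))
    (ha_symm : ∀ x y, a x y = a y x) (hb_symm : ∀ x y, b x y = b y x)
    (ha0 : ∀ x, a x x = 0) (hb0 : ∀ x, b x x = 0) {i₀ i₁ i₂ : Fin n}
    (h01 : i₀ ≠ i₁) (h02 : i₀ ≠ i₂) (h12 : i₁ ≠ i₂)
    (hα : Integrable (fun ω => a (Z i₀ ω) (Z i₁ ω)) μ)
    (hβ : Integrable (fun ω => b (Z i₀ ω) (Z i₁ ω)) μ)
    (hγ : Integrable (fun ω => a (Z i₀ ω) (Z i₁ ω) * b (Z i₀ ω) (Z i₁ ω)) μ)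
    (hδ : Integrable (fun ω => a (Z i₀ ω) (Z i₁ ω) * b (Z i₀ ω) (Z i₂ ω)) μ) :
    ∫ ω, (∑ i, ∑ j, Ucenter (Matrix.of fun k l => a (Z k ω) (Z l ω)) i j
        * Ucenter (Matrix.of fun k l => b (Z k ω) (Z l ω)) i j) / ((n : ℝ) * ((n : ℝ) - 3)) ∂μ
      = (∫ ω, a (Z i₀ ω) (Z i₁ ω) * b (Z i₀ ω) (Z i₁ ω) ∂μ)
        + (∫ ω, a (Z i₀ ω) (Z i₁ ω) ∂μ) * (∫ ω, b (Z i₀ ω) (Z i₁ ω) ∂μ)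
        - 2 * ∫ ω, a (Z i₀ ω) (Z i₁ ω) * b (Z i₀ ω) (Z i₂ ω) ∂μ := by
  have hM := integrable_and_integral_kernel_mul hZ hindep hid ha hb ha_symm hb_symm ha0 hb0
    h01 h02 h12 hα hβ hγ hδ
  have hpt (ω : Ω) := sum_Ucenter_mul_Ucenter_of_kernel (by omega : 2 < n) ha_symm hb_symm ha0 hb0
    fun i => Z i ω
  obtain ⟨hI1, hE1⟩ := integrable_and_integral_finsetSum univ fun i _ =>
    integrable_and_integral_finsetSum univ fun j _ => hM i j i j
  obtain ⟨hI2, hE2⟩ := integrable_and_integral_finsetSum univ fun i _ =>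
    integrable_and_integral_finsetSum univ fun j _ =>
      integrable_and_integral_finsetSum univ fun k _ => hM i j i k
  obtain ⟨hI3, hE3⟩ := integrable_and_integral_finsetSum univ fun i _ =>
    integrable_and_integral_finsetSum univ fun j _ =>
      integrable_and_integral_finsetSum univ fun k _ =>
        integrable_and_integral_finsetSum univ fun l _ => hM i j k l
  have hI12 : Integrable (fun ω => ∑ i, ∑ j, a (Z i ω) (Z j ω) * b (Z i ω) (Z j ω)
      - 2 / ((n : ℝ) - 2) * ∑ i, ∑ j, ∑ k, a (Z i ω) (Z j ω) * b (Z i ω) (Z k ω)) μ :=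
    hI1.sub (hI2.const_mul _)
  simp_rw [hpt]
  rw [integral_div, integral_add hI12 (hI3.div_const _), integral_sub hI1 (hI2.const_mul _),
    integral_const_mul, integral_div, hE1, hE2, hE3, sum_sum_kernelMoment_diag,
    sum_sum_sum_kernelMoment_self_left, sum_sum_sum_sum_kernelMoment, Fintype.card_fin]
  have hn' : (3 : ℝ) < n := by exact_mod_cast hn
  have h0 : (n : ℝ) ≠ 0 := by linarith
  have h1 : (n : ℝ) - 1 ≠ 0 := by linarith
  have h2 : (n : ℝ) - 2 ≠ 0 := by linarith
  have h3 : (n : ℝ) - 3 ≠ 0 := by linarith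
  field_simp
  ring

end IID

/-- `(Ã · B̃) = (1/(n(n−3))) Σ_{i≠j} Ã_ij B̃_ij` is an unbiased estimator of the
squared population distance covariance
`V²(X,Y) = E[|X−X'||Y−Y'|] + E|X−X'|·E|Y−Y'| − 2E[|X−X'||Y−Y''|]`. -/
theorem Ucenter_inner_unbiased_dcov
    {Ω : Type*} [MeasurableSpace Ω] (μ : Measure Ω) [IsProbabilityMeasure μ]
    {n p q : ℕ} (hn : 3 < n)
    (X : Fin n → Ω → EuclideanSpace ℝ (Fin p))
    (Y : Fin n → Ω → EuclideanSpace ℝ (Fin q))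
    (hX : ∀ i, Measurable (X i)) (hY : ∀ i, Measurable (Y i))
    (hindep : iIndepFun (fun i ω => (X i ω, Y i ω)) μ)
    (hid : ∀ i j : Fin n, IdentDistrib (fun ω => (X i ω, Y i ω))
      (fun ω => (X j ω, Y j ω)) μ μ)
    (i0 : Fin n) (i1 : Fin n) (i2 : Fin n)
    (h0 : i0 = ⟨0, by omega⟩) (h1 : i1 = ⟨1, by omega⟩) (h2 : i2 = ⟨2, by omega⟩)
    (hintα : Integrable (fun ω => ‖X i0 ω - X i1 ω‖) μ)
    (hintβ : Integrable (fun ω => ‖Y i0 ω - Y i1 ω‖) μ)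
    (hintγ : Integrable (fun ω => ‖X i0 ω - X i1 ω‖ * ‖Y i0 ω - Y i1 ω‖) μ)
    (hintδ : Integrable (fun ω => ‖X i0 ω - X i1 ω‖ * ‖Y i0 ω - Y i2 ω‖) μ) :
    ∫ ω, (∑ i, ∑ j, if i = j then 0 else
        Ucenter (Matrix.of fun k l => ‖X k ω - X l ω‖) i j *
        Ucenter (Matrix.of fun k l => ‖Y k ω - Y l ω‖) i j)
          / ((n : ℝ) * ((n : ℝ) - 3)) ∂μ
      = (∫ ω, ‖X i0 ω - X i1 ω‖ * ‖Y i0 ω - Y i1 ω‖ ∂μ)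
        + (∫ ω, ‖X i0 ω - X i1 ω‖ ∂μ) * (∫ ω, ‖Y i0 ω - Y i1 ω‖ ∂μ)
        - 2 * ∫ ω, ‖X i0 ω - X i1 ω‖ * ‖Y i0 ω - Y i2 ω‖ ∂μ := by
  have h01 : i0 ≠ i1 := by simp [h0, h1, Fin.ext_iff]
  have h02 : i0 ≠ i2 := by simp [h0, h2, Fin.ext_iff]
  have h12 : i1 ≠ i2 := by simp [h1, h2, Fin.ext_iff]
  simp_rw [sum_sum_ite_Ucenter_mul_Ucenter]
  exact integral_sum_Ucenter_mul_Ucenter (Z := fun i ω => (X i ω, Y i ω))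
    (a := fun x y => ‖x.1 - y.1‖) (b := fun x y => ‖x.2 - y.2‖) hn
    (fun i => (hX i).prodMk (hY i)) hindep hid (by fun_prop) (by fun_prop)
    (fun _ _ => norm_sub_rev _ _) (fun _ _ => norm_sub_rev _ _) (fun _ => by simp)
    (fun _ => by simp) h01 h02 h12 hintα hintβ hintγ hintδ
end

section
/- Let n ≥ 4, and let Ã, B̃, C̃ be the U-centered matrices of n×n real symmetric zero-diagonal matrices A, B, C (e.g. distance matrices of samples x, y, z). Define R*_{x,y} := (Ã·B̃)/(|Ã||B̃|) if |Ã||B̃| ≠ 0 and R*_{x,y} := 0 otherwise, and similarly R*_{x,z}, R*_{y,z}. Define the projections P_{z⊥}(x) := Ã − ((Ã·C̃)/(C̃·C̃)) C̃ and P_{z⊥}(y) := B̃ − ((B̃·C̃)/(C̃·C̃)) C̃ when (C̃·C̃) ≠ 0, and P_{z⊥}(x) := Ã, P_{z⊥}(y) := B̃ when (C̃·C̃) = 0; define the sample partial distance correlation R*(x,y;z) := (P_{z⊥}(x)·P_{z⊥}(y))/(|P_{z⊥}(x)||P_{z⊥}(y)|) if |P_{z⊥}(x)||P_{z⊥}(y)|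 ≠ 0 and R*(x,y;z) := 0 otherwise. If (1−(R*_{x,z})²)(1−(R*_{y,z})²) ≠ 0, then R*(x,y;z) = (R*_{x,y} − R*_{x,z} R*_{y,z}) / (√(1−(R*_{x,z})²) · √(1−(R*_{y,z})²)). -/
/-- The inner product `(C · D) = (1/(n(n−3))) Σ_{i≠j} C_ij D_ij`. -/
noncomputable def ipU {n : ℕ} (C D : Matrix (Fin n) (Fin n) ℝ) : ℝ :=
  (∑ i, ∑ j, if i = j then 0 else C i j * D i j) / ((n : ℝ) * ((n : ℝ) - 3))

/-- The norm `|C| = (C · C)^{1/2}`. -/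
noncomputable def nrmU {n : ℕ} (C : Matrix (Fin n) (Fin n) ℝ) : ℝ :=
  Real.sqrt (ipU C C)

open Classical in
/-- The bias-corrected distance correlation `R*` of two U-centered matrices. -/
noncomputable def RstarU {n : ℕ} (C D : Matrix (Fin n) (Fin n) ℝ) : ℝ :=
  if nrmU C * nrmU D ≠ 0 then ipU C D / (nrmU C * nrmU D) else 0

open Classical in
/-- The orthogonal projection of `A` onto the orthogonal complement of `C`
(in the Hilbert space of U-centered matrices); equal to `A` when `(C·C) = 0`. -/
noncomputable def projU {n : ℕ} (A C : Matrix (Fin n) (Fin n) ℝ) :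
    Matrix (Fin n) (Fin n) ℝ :=
  if ipU C C = 0 then A else A - (ipU A C / ipU C C) • C

open Classical in
/-- The sample partial distance correlation `R*(x,y;z)`. -/
noncomputable def pdcorU {n : ℕ} (A B C : Matrix (Fin n) (Fin n) ℝ) : ℝ :=
  if nrmU (projU A C) * nrmU (projU B C) ≠ 0 then
    ipU (projU A C) (projU B C) / (nrmU (projU A C) * nrmU (projU B C))
  else 0

section Aux

variable {n : ℕ}

lemma ipU_comm (X Y : Matrix (Fin n) (Fin n) ℝ) : ipU X Y = ipU Y X := by
  unfold ipU
  congr 1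
  refine Finset.sum_congr rfl fun i _ => Finset.sum_congr rfl fun j _ => ?_
  split_ifs <;> ring

lemma ipU_sub_smul_left (X Z Y : Matrix (Fin n) (Fin n) ℝ) (k : ℝ) :
    ipU (X - k • Z) Y = ipU X Y - k * ipU Z Y := by
  unfold ipU
  have h : ∀ i j : Fin n, (if i = j then (0:ℝ) else (X - k • Z) i j * Y i j)
      = (if i = j then 0 else X i j * Y i j)
        - k * (if i = j then 0 else Z i j * Y i j) := by
    intro i j
    simp only [Matrix.sub_apply, Matrix.smul_apply, smul_eq_mul]
    split_ifs <;> ring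
  simp only [h, Finset.sum_sub_distrib, ← Finset.mul_sum]
  ring

lemma ipU_sub_smul_right (X Y Z : Matrix (Fin n) (Fin n) ℝ) (k : ℝ) :
    ipU X (Y - k • Z) = ipU X Y - k * ipU X Z := by
  rw [ipU_comm, ipU_sub_smul_left, ipU_comm Y X, ipU_comm Z X]

lemma ipU_self_nonneg (hn : 4 ≤ n) (X : Matrix (Fin n) (Fin n) ℝ) : 0 ≤ ipU X X := by
  have h4 : (4:ℝ) ≤ (n:ℝ) := by exact_mod_cast hn
  have hd : (0:ℝ) < (n : ℝ) * ((n : ℝ) - 3) := by nlinarith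
  apply div_nonneg _ hd.le
  refine Finset.sum_nonneg fun i _ => Finset.sum_nonneg fun j _ => ?_
  split_ifs
  · exact le_rfl
  · exact mul_self_nonneg _

lemma ipU_sq_le (hn : 4 ≤ n) (X Y : Matrix (Fin n) (Fin n) ℝ) :
    ipU X Y ^ 2 ≤ ipU X X * ipU Y Y := by
  have H : ∀ lam : ℝ, 0 ≤ ipU Y Y * (lam * lam) + (2 * ipU X Y) * lam + ipU X X := by
    intro lam
    have h0 := ipU_self_nonneg hn (X - (-lam) • Y)
    rw [ipU_sub_smul_left, ipU_sub_smul_right, ipU_sub_smul_right, ipU_comm Y X] at h0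
    nlinarith [h0]
  have hd := discrim_le_zero H
  rw [discrim] at hd
  nlinarith [hd]

lemma real_calc (p q r s t u : ℝ) (hp : 0 < p) (hq : 0 < q) (hr : 0 < r)
    (hPa : 0 < p - t ^ 2 / r) (hPb : 0 < q - u ^ 2 / r) :
    (s - t * u / r) / (Real.sqrt (p - t ^ 2 / r) * Real.sqrt (q - u ^ 2 / r)) =
      (s / (Real.sqrt p * Real.sqrt q)
        - t / (Real.sqrt p * Real.sqrt r) * (u / (Real.sqrt q * Real.sqrt r)))
      / (Real.sqrt ((p - t ^ 2 / r) / p) * Real.sqrt ((q - u ^ 2 / r) / q)) := by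
  have hsp := Real.sqrt_pos.mpr hp
  have hsq := Real.sqrt_pos.mpr hq
  have hsr := Real.sqrt_pos.mpr hr
  have hsPa := Real.sqrt_pos.mpr hPa
  have hsPb := Real.sqrt_pos.mpr hPb
  have hrr : Real.sqrt r * Real.sqrt r = r := Real.mul_self_sqrt hr.le
  rw [Real.sqrt_div hPa.le, Real.sqrt_div hPb.le]
  have hD : Real.sqrt p * Real.sqrt q ≠ 0 := by positivity
  have key : t / (Real.sqrt p * Real.sqrt r) * (u / (Real.sqrt q * Real.sqrt r))
      = (t * u / r) / (Real.sqrt p * Real.sqrt q) := by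
    have e : Real.sqrt p * Real.sqrt r * (Real.sqrt q * Real.sqrt r)
        = Real.sqrt p * Real.sqrt q * r := by linear_combination Real.sqrt p * Real.sqrt q * hrr
    rw [div_mul_div_comm, e, mul_comm (Real.sqrt p * Real.sqrt q) r, ← div_div]
  rw [key, div_sub_div_same, div_mul_div_comm, div_div_div_comm, div_self hD, div_one]

theorem pdcor_key {n : ℕ} (hn : 4 ≤ n) (a b c : Matrix (Fin n) (Fin n) ℝ)
    (h : (1 - RstarU a c ^ 2) * (1 - RstarU b c ^ 2) ≠ 0) :
    pdcorU a b c =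
      (RstarU a b - RstarU a c * RstarU b c) /
      (Real.sqrt (1 - RstarU a c ^ 2) * Real.sqrt (1 - RstarU b c ^ 2)) := by
  classical
  have hpn := ipU_self_nonneg hn a
  have hqn := ipU_self_nonneg hn b
  have hrn := ipU_self_nonneg hn c
  by_cases hr : ipU c c = 0
  · -- c degenerate: projections are identity, correlations with c vanish
    have hnc : nrmU c = 0 := by rw [nrmU, hr, Real.sqrt_zero]
    have h1 : RstarU a c = 0 := by simp [RstarU, hnc]
    have h2 : RstarU b c = 0 := by simp [RstarU, hnc]
    rw [h1, h2]
    have hproj : projU a c = a := by simp [projU, hr]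
    have hprojb : projU b c = b := by simp [projU, hr]
    simp only [pdcorU, hproj, hprojb, RstarU]
    norm_num
  · have hrpos : 0 < ipU c c := lt_of_le_of_ne hrn (Ne.symm hr)
    have hpa : projU a c = a - (ipU a c / ipU c c) • c := by simp [projU, hr]
    have hpb : projU b c = b - (ipU b c / ipU c c) • c := by simp [projU, hr]
    have hPa : ipU (projU a c) (projU a c) = ipU a a - (ipU a c) ^ 2 / ipU c c := by
      rw [hpa, ipU_sub_smul_left, ipU_sub_smul_right, ipU_sub_smul_right, ipU_comm c a]
      field_simp
      ring
    have hPb : ipU (projU b c) (projU b c) = ipU b b - (ipU b c) ^ 2 / ipU c c := by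
      rw [hpb, ipU_sub_smul_left, ipU_sub_smul_right, ipU_sub_smul_right, ipU_comm c b]
      field_simp
      ring
    have hS : ipU (projU a c) (projU b c)
        = ipU a b - ipU a c * ipU b c / ipU c c := by
      rw [hpa, hpb, ipU_sub_smul_left, ipU_sub_smul_right, ipU_sub_smul_right,
        ipU_comm c b, ipU_comm c c]
      field_simp
      ring
    have hPa0 : 0 ≤ ipU a a - (ipU a c) ^ 2 / ipU c c := by
      rw [← hPa]; exact ipU_self_nonneg hn _
    have hPb0 : 0 ≤ ipU b b - (ipU b c) ^ 2 / ipU c c := by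
      rw [← hPb]; exact ipU_self_nonneg hn _
    by_cases hp0 : ipU a a = 0
    · -- a degenerate
      have ht : ipU a c = 0 := by
        have := ipU_sq_le hn a c
        rw [hp0] at this
        nlinarith [sq_nonneg (ipU a c)]
      have hs : ipU a b = 0 := by
        have := ipU_sq_le hn a b
        rw [hp0] at this
        nlinarith [sq_nonneg (ipU a b)]
      have hzero : nrmU (projU a c) = 0 := by
        rw [nrmU, hPa, hp0, ht]
        norm_num
      have hna : nrmU a = 0 := by rw [nrmU, hp0, Real.sqrt_zero]
      have h1 : RstarU a b = 0 := by simp [RstarU, hna]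
      have h2 : RstarU a c = 0 := by simp [RstarU, hna]
      simp [pdcorU, hzero, h1, h2]
    by_cases hq0 : ipU b b = 0
    · -- b degenerate
      have hu : ipU b c = 0 := by
        have := ipU_sq_le hn b c
        rw [hq0] at this
        nlinarith [sq_nonneg (ipU b c)]
      have hs : ipU a b = 0 := by
        have := ipU_sq_le hn a b
        rw [hq0] at this
        nlinarith [sq_nonneg (ipU a b)]
      have hzero : nrmU (projU b c) = 0 := by
        rw [nrmU, hPb, hq0, hu]
        norm_num
      have hnb : nrmU b = 0 := by rw [nrmU, hq0, Real.sqrt_zero]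
      have h1 : RstarU a b = 0 := by simp [RstarU, hnb]
      have h2 : RstarU b c = 0 := by simp [RstarU, hnb]
      simp [pdcorU, hzero, h1, h2]
    · -- main case
      have hppos : 0 < ipU a a := lt_of_le_of_ne hpn (Ne.symm hp0)
      have hqpos : 0 < ipU b b := lt_of_le_of_ne hqn (Ne.symm hq0)
      have hna : nrmU a = Real.sqrt (ipU a a) := rfl
      have hspa : (0:ℝ) < nrmU a := Real.sqrt_pos.mpr hppos
      have hspb : (0:ℝ) < nrmU b := Real.sqrt_pos.mpr hqpos
      have hspc : (0:ℝ) < nrmU c := Real.sqrt_pos.mpr hrpos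
      have hnab : nrmU a * nrmU b ≠ 0 := by positivity
      have hnac : nrmU a * nrmU c ≠ 0 := by positivity
      have hnbc : nrmU b * nrmU c ≠ 0 := by positivity
      have hRab : RstarU a b = ipU a b / (nrmU a * nrmU b) := if_pos hnab
      have hRac : RstarU a c = ipU a c / (nrmU a * nrmU c) := if_pos hnac
      have hRbc : RstarU b c = ipU b c / (nrmU b * nrmU c) := if_pos hnbc
      have hsqp : nrmU a * nrmU a = ipU a a := Real.mul_self_sqrt hpn
      have hsqq : nrmU b * nrmU b = ipU b b := Real.mul_self_sqrt hqn
      have hsqr : nrmU c * nrmU c = ipU c c := Real.mul_self_sqrt hrn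
      have e1 : nrmU a ^ 2 = ipU a a := by rw [sq, hsqp]
      have e2 : nrmU b ^ 2 = ipU b b := by rw [sq, hsqq]
      have e3 : nrmU c ^ 2 = ipU c c := by rw [sq, hsqr]
      have hAC : 1 - RstarU a c ^ 2
          = (ipU a a - (ipU a c) ^ 2 / ipU c c) / ipU a a := by
        rw [hRac, div_pow, mul_pow, e1, e3, sub_div, div_self (ne_of_gt hppos), div_div]
        ring
      have hBC : 1 - RstarU b c ^ 2
          = (ipU b b - (ipU b c) ^ 2 / ipU c c) / ipU b b := by
        rw [hRbc, div_pow, mul_pow, e2, e3, sub_div, div_self (ne_of_gt hqpos), div_div]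
        ring
      have h1 : 1 - RstarU a c ^ 2 ≠ 0 := by
        intro hz; exact h (by rw [hz, zero_mul])
      have h2 : 1 - RstarU b c ^ 2 ≠ 0 := by
        intro hz; exact h (by rw [hz, mul_zero])
      have hPapos : 0 < ipU a a - (ipU a c) ^ 2 / ipU c c := by
        rcases hPa0.lt_or_eq with hlt | heq
        · exact hlt
        · exfalso; apply h1; rw [hAC, ← heq, zero_div]
      have hPbpos : 0 < ipU b b - (ipU b c) ^ 2 / ipU c c := by
        rcases hPb0.lt_or_eq with hlt | heq
        · exact hlt
        · exfalso; apply h2; rw [hBC, ← heq, zero_div]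
      have hnpa : nrmU (projU a c) = Real.sqrt (ipU a a - (ipU a c) ^ 2 / ipU c c) := by
        rw [nrmU, hPa]
      have hnpb : nrmU (projU b c) = Real.sqrt (ipU b b - (ipU b c) ^ 2 / ipU c c) := by
        rw [nrmU, hPb]
      have hproj_ne : nrmU (projU a c) * nrmU (projU b c) ≠ 0 := by
        rw [hnpa, hnpb]
        positivity
      simp only [pdcorU]
      rw [if_pos hproj_ne, hS, hnpa, hnpb, hAC, hBC, hRab, hRac, hRbc]
      simp only [nrmU]
      exact real_calc _ _ _ _ _ _ hppos hqpos hrpos hPapos hPbpos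

end Aux

/-- Simplified computing formula for the sample partial distance correlation:
`R*(x,y;z) = (R*_{x,y} − R*_{x,z} R*_{y,z}) / (√(1−(R*_{x,z})²) √(1−(R*_{y,z})²))`. -/
theorem pdcor_computing_formula {n : ℕ} (hn : 4 ≤ n)
    (A B C : Matrix (Fin n) (Fin n) ℝ)
    (hAsymm : A.IsSymm) (hAdiag : ∀ i, A i i = 0)
    (hBsymm : B.IsSymm) (hBdiag : ∀ i, B i i = 0)
    (hCsymm : C.IsSymm) (hCdiag : ∀ i, C i i = 0)
    (h : (1 - RstarU (Ucenter A) (Ucenter C) ^ 2) *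
         (1 - RstarU (Ucenter B) (Ucenter C) ^ 2) ≠ 0) :
    pdcorU (Ucenter A) (Ucenter B) (Ucenter C) =
      (RstarU (Ucenter A) (Ucenter B) -
        RstarU (Ucenter A) (Ucenter C) * RstarU (Ucenter B) (Ucenter C)) /
      (Real.sqrt (1 - RstarU (Ucenter A) (Ucenter C) ^ 2) *
       Real.sqrt (1 - RstarU (Ucenter B) (Ucenter C) ^ 2)) := by
  exact pdcor_key hn _ _ _ h
end
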